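/- arXiv:2307.14154 — 4 statements merged into one kernel-verified Lean document; each statement's English description precedes it below -/
import Mathlib

section
/- Let N ≥ 1 and let A, B be vectors in ℝ^N with ‖B‖ ≤ 1. Then ⟨A, B⟩ ≤ √(1 + ‖A‖²) − √(1 − ‖B‖²). -/
open scoped RealInnerProductSpace

/-- Inequality (2.2): for vectors `A, B ∈ ℝ^N` with `‖B‖ ≤ 1`,
`⟨A, B⟩ ≤ √(1 + ‖A‖²) − √(1 − ‖B‖²)`. -/
theorem vector_area_inequality {N : ℕ} (hN : 1 ≤ N)
    (A B : EuclideanSpace ℝ (Fin N)) (hB : ‖B‖ ≤ 1) :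
    ⟪A, B⟫ ≤ Real.sqrt (1 + ‖A‖ ^ 2) - Real.sqrt (1 - ‖B‖ ^ 2) := by
  have h1 : ⟪A, B⟫ ≤ ‖A‖ * ‖B‖ := real_inner_le_norm A B
  set a := ‖A‖
  set b := ‖B‖
  have ha : 0 ≤ a := norm_nonneg A
  have hb : 0 ≤ b := norm_nonneg B
  have hs : Real.sqrt (1 - b ^ 2) ^ 2 = 1 - b ^ 2 :=
    Real.sq_sqrt (by nlinarith)
  have ht : Real.sqrt (1 + a ^ 2) ^ 2 = 1 + a ^ 2 :=
    Real.sq_sqrt (by positivity)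
  have hsn : 0 ≤ Real.sqrt (1 - b ^ 2) := Real.sqrt_nonneg _
  have htn : 0 ≤ Real.sqrt (1 + a ^ 2) := Real.sqrt_nonneg _
  nlinarith [sq_nonneg (a * Real.sqrt (1 - b ^ 2) - b),
    sq_nonneg (a * b + Real.sqrt (1 - b ^ 2) - Real.sqrt (1 + a ^ 2)),
    mul_nonneg (mul_nonneg ha hb) hsn]
end

section
/- Let N ≥ 1 and let A, B be vectors in ℝ^N with ‖B‖ ≤ 1 such that ⟨A, B⟩ = √(1 + ‖A‖²) − √(1 − ‖B‖²). Then B = A/√(1 + ‖A‖²). -/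
open scoped RealInnerProductSpace

/-- Equality case of the vector inequality: if `‖B‖ ≤ 1` and
`⟨A, B⟩ = √(1 + ‖A‖²) − √(1 − ‖B‖²)`, then `B = A / √(1 + ‖A‖²)`. -/
theorem vector_area_equality_case {N : ℕ} (hN : 1 ≤ N)
    (A B : EuclideanSpace ℝ (Fin N)) (hB : ‖B‖ ≤ 1)
    (heq : ⟪A, B⟫ = Real.sqrt (1 + ‖A‖ ^ 2) - Real.sqrt (1 - ‖B‖ ^ 2)) :
    B = (Real.sqrt (1 + ‖A‖ ^ 2))⁻¹ • A := by
  set a := ‖A‖ with ha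
  set b := ‖B‖ with hb
  have ha0 : 0 ≤ a := norm_nonneg A
  have hb0 : 0 ≤ b := norm_nonneg B
  set t := Real.sqrt (1 - b ^ 2) with htdef
  set s := Real.sqrt (1 + a ^ 2) with hsdef
  have ht0 : 0 ≤ t := Real.sqrt_nonneg _
  have hs0 : 0 ≤ s := Real.sqrt_nonneg _
  have ht2 : t ^ 2 = 1 - b ^ 2 := Real.sq_sqrt (by nlinarith)
  have hs2 : s ^ 2 = 1 + a ^ 2 := Real.sq_sqrt (by nlinarith)
  have key : s ^ 2 = (a * b + t) ^ 2 + (a * t - b) ^ 2 := by nlinarith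
  have hcs : ⟪A, B⟫ ≤ a * b := real_inner_le_norm A B
  have hge : a * b + t ≤ s := by nlinarith [sq_nonneg (a * t - b), sq_nonneg (s - (a * b + t))]
  have hseq : s = a * b + t := by linarith
  have h_at : a * t = b := by nlinarith [sq_nonneg (a * t - b)]
  have hABeq : ⟪A, B⟫ = a * b := by linarith
  have hsmul : b • A = a • B := inner_eq_norm_mul_iff_real.mp hABeq
  have hs_pos : 0 < s := by nlinarith
  by_cases hA : a = 0
  · have hb0' : b = 0 := by rw [← h_at, hA]; ring
    have hBzero : B = 0 := norm_eq_zero.mp hb0'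
    have hAzero : A = 0 := norm_eq_zero.mp hA
    simp [hBzero, hAzero]
  · have haval : a ≠ 0 := hA
    have hbval : b = a / s := by
      field_simp
      nlinarith
    have : B = a⁻¹ • (b • A) := by
      rw [hsmul, smul_smul, inv_mul_cancel₀ haval, one_smul]
    rw [this, smul_smul, hbval]
    congr 1
    field_simp
end

section
/- Let Ω ⊆ ℝ^N (N ≥ 2) be an open bounded set, let M > 0, and let g : ℝ → ℝ be a function with g(s) ≤ M for every s ∈ ℝ. Let f ∈ L¹(Ω) with f ≥ 0 almost everywhere, let u : Ω → ℝ be measurable with g∘u integrable on Ω, and let z : Ω → ℝ^N be a measurable vector field with ‖z(x)‖ ≤ 1 for almost every x ∈ Ω, such that ∫_Ω g(u) φ dx + ∫_Ω ⟨z, ∇φ⟩ dx = ∫_Ω f φ dx for every φ ∈ C_c^∞(Ω). Let C > 0 be any constant such that the Sobolev inequality (∫_Ω |φ|^{N/(N−1)} dx)^{(N−1)/N} ≤ C ∫_Ω ‖∇φ(x)‖ dx holds for all φ ∈ C_c^∞(Ω). Then for every nonnegative φ ∈ C_c^∞(Ω) one has ∫_Ω f φ dx ≤ (1 + M·|Ω|^{1/N}·C)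 ∫_Ω ‖∇φ(x)‖ dx. -/
open scoped RealInnerProductSpace
open MeasureTheory

/-- Remark 3.2 (second claim): if the absorption `g` is bounded above by `M`, the
datum `f ≥ 0` is integrable, and `g(u) − div z = f` weakly with `‖z‖ ≤ 1` a.e.,
then for any Sobolev constant `C` for `W₀^{1,1}(Ω) ↪ L^{N/(N−1)}(Ω)` one has
`∫_Ω f φ ≤ (1 + M |Ω|^{1/N} C) ∫_Ω ‖∇φ‖` for every nonnegative test function `φ`. -/
theorem bounded_absorption_restricts_data {N : ℕ} (hN : 2 ≤ N)
    (Ω : Set (EuclideanSpace ℝ (Fin N))) (hΩo : IsOpen Ω) (hΩb : Bornology.IsBounded Ω)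
    (M : ℝ) (hM : 0 < M) (g : ℝ → ℝ) (hg : ∀ s : ℝ, g s ≤ M)
    (f : EuclideanSpace ℝ (Fin N) → ℝ) (hf : IntegrableOn f Ω)
    (hf0 : ∀ᵐ x ∂(volume.restrict Ω), 0 ≤ f x)
    (u : EuclideanSpace ℝ (Fin N) → ℝ) (hu : Measurable u)
    (hgu : IntegrableOn (fun x => g (u x)) Ω)
    (z : EuclideanSpace ℝ (Fin N) → EuclideanSpace ℝ (Fin N)) (hz : Measurable z)
    (hz1 : ∀ᵐ x ∂(volume.restrict Ω), ‖z x‖ ≤ 1)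
    (hweak : ∀ φ : EuclideanSpace ℝ (Fin N) → ℝ, ContDiff ℝ (⊤ : ℕ∞) φ → HasCompactSupport φ →
      tsupport φ ⊆ Ω →
      (∫ x in Ω, g (u x) * φ x) + ∫ x in Ω, ⟪z x, gradient φ x⟫ = ∫ x in Ω, f x * φ x)
    (C : ℝ) (hC : 0 < C)
    (hSob : ∀ φ : EuclideanSpace ℝ (Fin N) → ℝ, ContDiff ℝ (⊤ : ℕ∞) φ → HasCompactSupport φ →
      tsupport φ ⊆ Ω →
      (∫ x in Ω, |φ x| ^ ((N : ℝ) / (N - 1))) ^ ((N - 1 : ℝ) / N) ≤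
        C * ∫ x in Ω, ‖gradient φ x‖) :
    ∀ φ : EuclideanSpace ℝ (Fin N) → ℝ, ContDiff ℝ (⊤ : ℕ∞) φ → HasCompactSupport φ →
      tsupport φ ⊆ Ω → (∀ x, 0 ≤ φ x) →
      ∫ x in Ω, f x * φ x ≤
        (1 + M * (volume Ω).toReal ^ ((1 : ℝ) / N) * C) * ∫ x in Ω, ‖gradient φ x‖ := by
  intro φ hφs hφc hφsupp hφ0
  have hμfin : volume Ω < ⊤ := hΩb.measure_lt_top
  haveI : IsFiniteMeasure (volume.restrict Ω) :=
    ⟨by rwa [Measure.restrict_apply_univ]⟩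
  have hφcont : Continuous φ := hφs.continuous
  -- gradient of φ is continuous with compact support
  have hgrad_eq : gradient φ = fun x =>
      (InnerProductSpace.toDual ℝ (EuclideanSpace ℝ (Fin N))).symm (fderiv ℝ φ x) := rfl
  have hgradc : Continuous (gradient φ) := by
    rw [hgrad_eq]
    exact (InnerProductSpace.toDual ℝ _).symm.continuous.comp
      (hφs.continuous_fderiv (by simp))
  have hgradcs : HasCompactSupport (gradient φ) := by
    rw [hgrad_eq]
    exact (hφc.fderiv ℝ).comp_left (by simp)
  -- integrability facts
  have hφint : IntegrableOn φ Ω := (hφcont.integrable_of_hasCompactSupport hφc).integrableOn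
  have hgradint : IntegrableOn (fun x => ‖gradient φ x‖) Ω :=
    ((hgradc.norm).integrable_of_hasCompactSupport hgradcs.norm).integrableOn
  have hgradnn : 0 ≤ ∫ x in Ω, ‖gradient φ x‖ :=
    integral_nonneg fun x => norm_nonneg _
  have hinner_meas : AEStronglyMeasurable (fun x => ⟪z x, gradient φ x⟫)
      (volume.restrict Ω) :=
    (hz.aemeasurable.inner hgradc.measurable.aemeasurable).aestronglyMeasurable
  have hinner_int : Integrable (fun x => ⟪z x, gradient φ x⟫) (volume.restrict Ω) := by
    refine hgradint.mono' hinner_meas ?_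
    filter_upwards [hz1] with x hx
    calc ‖⟪z x, gradient φ x⟫‖ ≤ ‖z x‖ * ‖gradient φ x‖ := norm_inner_le_norm _ _
    _ ≤ 1 * ‖gradient φ x‖ := by
        exact mul_le_mul_of_nonneg_right hx (norm_nonneg _)
    _ = ‖gradient φ x‖ := one_mul _
  -- bound the divergence term
  have hinner_le : ∫ x in Ω, ⟪z x, gradient φ x⟫ ≤ ∫ x in Ω, ‖gradient φ x‖ := by
    refine integral_mono_ae hinner_int hgradint ?_
    filter_upwards [hz1] with x hx
    calc ⟪z x, gradient φ x⟫ ≤ ‖z x‖ * ‖gradient φ x‖ := real_inner_le_norm _ _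
    _ ≤ 1 * ‖gradient φ x‖ := mul_le_mul_of_nonneg_right hx (norm_nonneg _)
    _ = ‖gradient φ x‖ := one_mul _
  -- bound the absorption term
  have hguφint : Integrable (fun x => g (u x) * φ x) (volume.restrict Ω) := by
    obtain ⟨B, hB⟩ := hφc.exists_bound_of_continuous hφcont
    exact hgu.bdd_mul (c := B) hφcont.aestronglyMeasurable.restrict
      (Filter.Eventually.of_forall hB) |>.congr
      (Filter.Eventually.of_forall fun x => mul_comm _ _)
  have habs_le : ∫ x in Ω, g (u x) * φ x ≤ M * ∫ x in Ω, φ x := by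
    rw [← integral_const_mul]
    refine integral_mono_ae hguφint (hφint.const_mul M) ?_
    refine Filter.Eventually.of_forall fun x => ?_
    exact mul_le_mul_of_nonneg_right (hg (u x)) (hφ0 x)
  -- Hölder: ∫ φ ≤ |Ω|^{1/N} (∫ φ^{N/(N-1)})^{(N-1)/N}
  have hN1 : (1 : ℝ) < N := by exact_mod_cast Nat.lt_of_lt_of_le one_lt_two hN
  have hpq : (N : ℝ).HolderConjugate ((N : ℝ) / ((N : ℝ) - 1)) :=
    Real.HolderConjugate.conjExponent hN1
  have hφmem : MemLp φ (ENNReal.ofReal ((N : ℝ) / ((N : ℝ) - 1)))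
      (volume.restrict Ω) := by
    obtain ⟨B, hB⟩ := hφc.exists_bound_of_continuous hφcont
    exact MemLp.of_bound hφcont.aestronglyMeasurable.restrict B
      (Filter.Eventually.of_forall hB)
  have h1mem : MemLp (fun _ => (1 : ℝ)) (ENNReal.ofReal (N : ℝ))
      (volume.restrict Ω) := memLp_const 1
  have hholder := integral_mul_le_Lp_mul_Lq_of_nonneg (μ := volume.restrict Ω) hpq
    (f := fun _ => (1 : ℝ)) (g := φ)
    (Filter.Eventually.of_forall fun _ => zero_le_one)
    (Filter.Eventually.of_forall hφ0) h1mem hφmem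
  have habs : ∀ x, |φ x| = φ x := fun x => abs_of_nonneg (hφ0 x)
  have hint1 : ∫ _x in Ω, (1 : ℝ) ^ (N : ℝ) = (volume Ω).toReal := by
    simp [Real.one_rpow, Measure.restrict_apply_univ, Measure.real]
  have hφL : ∫ x in Ω, φ x ≤
      (volume Ω).toReal ^ ((1 : ℝ) / N) *
        (∫ x in Ω, |φ x| ^ ((N : ℝ) / ((N : ℝ) - 1))) ^ (((N : ℝ) - 1) / N) := by
    have h1q : 1 / ((N : ℝ) / ((N : ℝ) - 1)) = ((N : ℝ) - 1) / N := one_div_div _ _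
    have := hholder
    simp only [one_mul] at this
    rw [hint1, h1q] at this
    refine this.trans_eq ?_
    simp only [habs]
  have hSobφ := hSob φ hφs hφc hφsupp
  have hpow_nn : (0 : ℝ) ≤ (volume Ω).toReal ^ ((1 : ℝ) / N) :=
    Real.rpow_nonneg ENNReal.toReal_nonneg _
  have hφL2 : ∫ x in Ω, φ x ≤
      (volume Ω).toReal ^ ((1 : ℝ) / N) * (C * ∫ x in Ω, ‖gradient φ x‖) := by
    refine hφL.trans (mul_le_mul_of_nonneg_left ?_ hpow_nn)
    exact hSobφ
  -- combine
  have hkey := hweak φ hφs hφc hφsupp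
  have : ∫ x in Ω, f x * φ x ≤
      M * ((volume Ω).toReal ^ ((1 : ℝ) / N) * (C * ∫ x in Ω, ‖gradient φ x‖)) +
        ∫ x in Ω, ‖gradient φ x‖ := by
    rw [← hkey]
    have h1 : ∫ x in Ω, g (u x) * φ x ≤
        M * ((volume Ω).toReal ^ ((1 : ℝ) / N) * (C * ∫ x in Ω, ‖gradient φ x‖)) :=
      habs_le.trans (mul_le_mul_of_nonneg_left hφL2 hM.le)
    linarith [hinner_le]
  linarith [this]
end

section
/- Let N ≥ 3 be a natural number and let 0 < α < N − 1. Define the vector field Z : ℝ^N ∖ {0} → ℝ^N by Z(x) = −(α‖x‖^{−α−2}/√(1 + α²‖x‖^{−2α−2})) x, the function v_α : (0,∞) → ℝ by v_α(r) = α r^{−α−1} (α² r^{−2α−2} − (α + 2 − N)/(N − 1)) / (1 + α² r^{−2α−2})^{3/2}, and f_α : ℝ^N ∖ {0} → ℝ by f_α(x) = ((N−1)/‖x‖) · ( v_α(‖x‖) + (‖x‖^{1−α} − ‖x‖)/(N−1) ). Then Z is differentiable at every x ≠ 0 and, for every x ∈ ℝ^N with x ≠ 0, (‖x‖^{−α}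 − 1) − div Z(x) = f_α(x), where div Z(x) = Σ_{i=1}^N ∂Z_i/∂x_i (x). In particular, u_α(x) = ‖x‖^{−α} − 1 is a classical solution of u − div(∇u/√(1 + |∇u|²)) = f_α on the punctured unit ball B₁(0) ∖ {0}. -/
/-!
Write `T s = s / √(1 + s²)` and `w r = u_α'(r) = -α r^(-α-1)`. Then `Z x = T (w ‖x‖) · x / ‖x‖`,
and a radial field `φ(‖x‖) x / ‖x‖` has divergence `φ'(r) + (N - 1) φ(r) / r` at `‖x‖ = r`.
Since `T'(s) = (1 + s²)^(-3/2)`, the identity `u_α - div Z = f_α` becomes an algebraic identity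
in `r` and `P = r^(-α-1)`.
-/

open Real

section InnerProductSpace

variable {E : Type*} [NormedAddCommGroup E] [InnerProductSpace ℝ E]

theorem hasFDerivAt_norm_of_ne_zero {x : E} (hx : x ≠ 0) :
    HasFDerivAt (fun y : E => ‖y‖) (‖x‖⁻¹ • innerSL ℝ x) x := by
  have h := (hasStrictFDerivAt_norm_sq x).hasFDerivAt.sqrt (by positivity)
  simp only [sqrt_sq (norm_nonneg _)] at h
  convert h using 1
  ext y
  simp only [smul_apply, coe_innerSL_apply, smul_eq_mul, one_div, mul_inv_rev, nsmul_eq_mul,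
    Nat.cast_ofNat]
  field_simp

theorem HasDerivAt.hasFDerivAt_smul_self_norm {g : ℝ → ℝ} {g' : ℝ} {x : E}
    (hg : HasDerivAt g g' ‖x‖) (hx : x ≠ 0) :
    HasFDerivAt (fun y => g ‖y‖ • y)
      (g ‖x‖ • ContinuousLinearMap.id ℝ E + ((g' / ‖x‖) • innerSL ℝ x).smulRight x) x := by
  rw [div_eq_mul_inv, mul_smul]
  exact (hg.comp_hasFDerivAt x (hasFDerivAt_norm_of_ne_zero hx)).smul (hasFDerivAt_id x)

end InnerProductSpace

section Divergence

variable {ι : Type*} [Fintype ι] [DecidableEq ι]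

noncomputable def divergence (Z : EuclideanSpace ℝ ι → EuclideanSpace ℝ ι)
    (x : EuclideanSpace ℝ ι) : ℝ :=
  ∑ i, fderiv ℝ Z x (EuclideanSpace.single i 1) i

theorem divergence_smul_self_norm {g : ℝ → ℝ} {g' : ℝ} {x : EuclideanSpace ℝ ι}
    (hg : HasDerivAt g g' ‖x‖) (hx : x ≠ 0) :
    divergence (fun y => g ‖y‖ • y) x = Fintype.card ι * g ‖x‖ + ‖x‖ * g' := by
  have hr : ‖x‖ ≠ 0 := norm_ne_zero_iff.mpr hx
  have hsq : ∑ i, x i * x i = ‖x‖ ^ 2 := by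
    rw [← real_inner_self_eq_norm_sq, PiLp.inner_apply]; simp [sq]
  rw [divergence, (hg.hasFDerivAt_smul_self_norm hx).fderiv]
  simp only [add_apply, smul_apply, ContinuousLinearMap.id_apply,
    ContinuousLinearMap.smulRight_apply, coe_innerSL_apply, EuclideanSpace.inner_single_right,
    ringHom_apply, one_mul, smul_eq_mul, PiLp.add_apply, PiLp.smul_apply, PiLp.single_eq_same,
    mul_one, mul_assoc, Finset.sum_add_distrib, Finset.sum_const, Finset.card_univ, nsmul_eq_mul,
    ← Finset.mul_sum, hsq, add_right_inj]
  field_simp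

theorem divergence_div_norm_smul {φ : ℝ → ℝ} {φ' : ℝ} {x : EuclideanSpace ℝ ι}
    (hφ : HasDerivAt φ φ' ‖x‖) (hx : x ≠ 0) :
    divergence (fun y => (φ ‖y‖ / ‖y‖) • y) x =
      φ' + (Fintype.card ι - 1) * φ ‖x‖ / ‖x‖ := by
  have hr : ‖x‖ ≠ 0 := norm_ne_zero_iff.mpr hx
  rw [divergence_smul_self_norm (g := fun t => φ t / t) (hφ.div (hasDerivAt_id' _) hr) hx]
  field_simp
  ring

end Divergence

noncomputable def meanCurvatureFlux (s : ℝ) : ℝ := s / √(1 + s ^ 2)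

theorem hasDerivAt_meanCurvatureFlux (s : ℝ) :
    HasDerivAt meanCurvatureFlux (√(1 + s ^ 2) ^ 3)⁻¹ s := by
  have hS : 0 < 1 + s ^ 2 := by positivity
  refine ((hasDerivAt_id' s).div (((hasDerivAt_pow 2 s).const_add 1).sqrt hS.ne')
    (sqrt_pos.2 hS).ne').congr_deriv ?_
  field_simp
  rw [sq_sqrt hS.le]
  ring

theorem hasDerivAt_neg_mul_rpow (α : ℝ) {r : ℝ} (hr : 0 < r) :
    HasDerivAt (fun t => -α * t ^ (-α - 1)) (α * (α + 1) * r ^ (-α - 2)) r := by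
  refine ((hasDerivAt_rpow_const (p := -α - 1) (Or.inl hr.ne')).const_mul (-α)).congr_deriv ?_
  rw [show -α - 1 - 1 = -α - 2 by ring]
  ring

section RpowShifts

variable (α : ℝ) {r : ℝ} (hr : 0 < r)
include hr

theorem rpow_neg_eq : r ^ (-α) = r ^ (-α - 1) * r := by
  rw [← rpow_add_one hr.ne']; ring_nf

theorem rpow_neg_sub_two_eq : r ^ (-α - 2) = r ^ (-α - 1) / r := by
  rw [← rpow_sub_one hr.ne']; ring_nf

theorem rpow_one_sub_eq : r ^ (1 - α) = r ^ (-α - 1) * r ^ 2 := by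
  rw [← rpow_add_natCast hr.ne']; push_cast; ring_nf

theorem rpow_neg_two_mul_sub_two_eq : r ^ (-2 * α - 2) = (r ^ (-α - 1)) ^ 2 := by
  rw [← rpow_mul_natCast hr.le]; push_cast; ring_nf

end RpowShifts

theorem neg_mul_rpow_div_sqrt_eq (α : ℝ) {r : ℝ} (hr : 0 < r) :
    -(α * r ^ (-α - 2) / √(1 + α ^ 2 * r ^ (-2 * α - 2))) =
      meanCurvatureFlux (-α * r ^ (-α - 1)) / r := by
  rw [meanCurvatureFlux, rpow_neg_sub_two_eq α hr, rpow_neg_two_mul_sub_two_eq α hr]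
  ring_nf

theorem radial_equation_identity (α n : ℝ) {r : ℝ} (hr : 0 < r) (hn : n - 1 ≠ 0) :
    (r ^ (-α) - 1) - ((√(1 + (-α * r ^ (-α - 1)) ^ 2) ^ 3)⁻¹ * (α * (α + 1) * r ^ (-α - 2)) +
        (n - 1) * meanCurvatureFlux (-α * r ^ (-α - 1)) / r) =
      (n - 1) / r * (α * r ^ (-α - 1) * (α ^ 2 * r ^ (-2 * α - 2) - (α + 2 - n) / (n - 1)) /
        (1 + α ^ 2 * r ^ (-2 * α - 2)) ^ ((3 : ℝ) / 2) + (r ^ (1 - α) - r) / (n - 1)) := by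
  rw [meanCurvatureFlux, rpow_neg_eq α hr, rpow_neg_sub_two_eq α hr, rpow_one_sub_eq α hr,
    rpow_neg_two_mul_sub_two_eq α hr]
  generalize r ^ (-α - 1) = P
  have hS : 0 < 1 + α ^ 2 * P ^ 2 := by positivity
  have h32 :
      (1 + α ^ 2 * P ^ 2) ^ ((3 : ℝ) / 2) = √(1 + α ^ 2 * P ^ 2) * (1 + α ^ 2 * P ^ 2) := by
    rw [show (3 : ℝ) / 2 = 1 / 2 + 1 by norm_num, rpow_add_one hS.ne', sqrt_eq_rpow]
  have hcube : √(1 + (-α * P) ^ 2) ^ 3 = √(1 + α ^ 2 * P ^ 2) * (1 + α ^ 2 * P ^ 2) := by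
    rw [neg_mul, neg_sq, mul_pow, pow_succ', sq_sqrt hS.le]
  rw [h32, hcube, neg_mul, neg_sq, mul_pow]
  field_simp
  ring

theorem unbounded_radial_solution_general {N : ℕ} (hN : 3 ≤ N) (α : ℝ)
    (Z : EuclideanSpace ℝ (Fin N) → EuclideanSpace ℝ (Fin N))
    (hZ : Z = fun x => (-(α * ‖x‖ ^ (-α - 2) /
      Real.sqrt (1 + α ^ 2 * ‖x‖ ^ (-2 * α - 2)))) • x)
    (v : ℝ → ℝ)
    (hv : v = fun r => α * r ^ (-α - 1) *
      (α ^ 2 * r ^ (-2 * α - 2) - (α + 2 - N) / ((N : ℝ) - 1)) /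
      (1 + α ^ 2 * r ^ (-2 * α - 2)) ^ ((3 : ℝ) / 2))
    (fα : EuclideanSpace ℝ (Fin N) → ℝ)
    (hfα : fα = fun x => (((N : ℝ) - 1) / ‖x‖) *
      (v ‖x‖ + (‖x‖ ^ (1 - α) - ‖x‖) / ((N : ℝ) - 1))) :
    ∀ x : EuclideanSpace ℝ (Fin N), x ≠ 0 →
      DifferentiableAt ℝ Z x ∧
      (‖x‖ ^ (-α) - 1) -
        (∑ i : Fin N, fderiv ℝ Z x (EuclideanSpace.single i 1) i) = fα x := by
  intro x hx
  have hr : 0 < ‖x‖ := norm_pos_iff.mpr hx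
  have hN1 : (N : ℝ) - 1 ≠ 0 := sub_ne_zero.2 (Nat.cast_ne_one.2 (by omega))
  set φ : ℝ → ℝ := fun t => meanCurvatureFlux (-α * t ^ (-α - 1))
  have hZφ : Z = fun y => (φ ‖y‖ / ‖y‖) • y := by
    rw [hZ]
    funext y
    rcases eq_or_ne y 0 with rfl | hy
    · simp
    · rw [neg_mul_rpow_div_sqrt_eq α (norm_pos_iff.mpr hy)]
  have hφ : HasDerivAt φ _ ‖x‖ :=
    (hasDerivAt_meanCurvatureFlux _).comp _ (hasDerivAt_neg_mul_rpow α hr)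
  subst hZφ hfα hv
  refine ⟨((hφ.div (hasDerivAt_id' _) hr.ne').hasFDerivAt_smul_self_norm hx).differentiableAt, ?_⟩
  change _ - divergence _ x = _
  rw [divergence_div_norm_smul hφ hx, Fintype.card_fin]
  exact radial_equation_identity α N hr hN1

/-- Example 5.4: for `N ≥ 3` and `0 < α < N − 1`, the flux field
`Z(x) = −(α ‖x‖^{−α−2}/√(1 + α² ‖x‖^{−2α−2})) x` is differentiable away from the
origin and `(‖x‖^{−α} − 1) − div Z(x) = f_α(x)` for every `x ≠ 0`; i.e.
`u_α(x) = ‖x‖^{−α} − 1` is a classical solution of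
`u − div(∇u/√(1+|∇u|²)) = f_α` on the punctured unit ball. -/
theorem unbounded_radial_solution {N : ℕ} (hN : 3 ≤ N) (α : ℝ) (hα0 : 0 < α)
    (hαN : α < (N : ℝ) - 1)
    (Z : EuclideanSpace ℝ (Fin N) → EuclideanSpace ℝ (Fin N))
    (hZ : Z = fun x => (-(α * ‖x‖ ^ (-α - 2) /
      Real.sqrt (1 + α ^ 2 * ‖x‖ ^ (-2 * α - 2)))) • x)
    (v : ℝ → ℝ)
    (hv : v = fun r => α * r ^ (-α - 1) *
      (α ^ 2 * r ^ (-2 * α - 2) - (α + 2 - N) / ((N : ℝ) - 1)) /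
      (1 + α ^ 2 * r ^ (-2 * α - 2)) ^ ((3 : ℝ) / 2))
    (fα : EuclideanSpace ℝ (Fin N) → ℝ)
    (hfα : fα = fun x => (((N : ℝ) - 1) / ‖x‖) *
      (v ‖x‖ + (‖x‖ ^ (1 - α) - ‖x‖) / ((N : ℝ) - 1))) :
    ∀ x : EuclideanSpace ℝ (Fin N), x ≠ 0 →
      DifferentiableAt ℝ Z x ∧
      (‖x‖ ^ (-α) - 1) -
        (∑ i : Fin N, fderiv ℝ Z x (EuclideanSpace.single i 1) i) = fα x :=
  unbounded_radial_solution_general hN α Z hZ v hv fα hfα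
end
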